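/- Let A = (a_{ij}) be an n×n complex matrix and Φ an orthogonal basis of ℂ^n consisting of eigenvectors of A, with λ_φ the eigenvalue of φ ∈ Φ. Suppose there exist d ∈ ℂ and m₀ ∈ H such that for every character μ of H the vector φ_μ lies in Φ with A φ_μ = d · μ(m₀) · φ_μ, and the assignment μ ↦ φ_μ is injective. Set Φ₀ = Φ \ {φ_μ : μ ∈ Ĥ}. Then ∑_{φ ∈ Φ₀} ∑_{χ ∈ Ĝ} λ_φ · |P_χ(φ)|² / ⟨φ, φ⟩ = |G| · ∑_i (w i)(h i) a_{ii} − δ · d · |G|² · |H| / m, where δ = 1 if m₀ is the identity element of H and δ = 0 otherwise. (This is the paper's Corollary (cor:per-avg), the exact double average of squared periods over the cuspidal subspace, in the linear-algebra form in which it is proved: A is the Brandt matrix A_m, d = deg T_m, m₀ is the class of m in Cl⁺(N(𝒪̂)) ≅ H, and δ = δ⁺(𝒪, m).) -/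

import Mathlib

/-! Plancherel on the dual of `G` turns `∑_χ |P_χ(φ)|²` into `|G| ∑_i h_i |φ_i|²`. Summed
against `λ_φ / ⟨φ, φ⟩` over the whole eigenbasis `Φ`, this gives
`|G| ∑_i h_i ∑_φ λ_φ |φ_i|² / ⟨φ, φ⟩`, and the inner sum is the diagonal entry `w_i a_ii`, because
`∑_φ φ_j conj(φ_i) / ⟨φ, φ⟩ = w_i δ_ij` is the expansion of a standard basis vector in `Φ`.
The Eisenstein vectors have unimodular entries, so `φ_μ` contributes `d μ(m₀) |G|² / m`, and
`∑_μ μ(m₀) = δ |H|` by orthogonality of characters. -/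

open Finset
open scoped ComplexConjugate

namespace MonoidHom

variable {K : Type*} [CommGroup K]

theorem norm_apply_eq_one [Finite K] (χ : K →* ℂˣ) (t : K) : ‖(χ t : ℂ)‖ = 1 := by
  have h : (χ t : ℂ) ^ Nat.card K = 1 := by
    rw [← Units.val_pow_eq_pow_val, ← map_pow, pow_card_eq_one', map_one, Units.val_one]
  exact Complex.norm_eq_one_of_pow_eq_one h Nat.card_pos.ne'

theorem conj_apply_eq_inv [Finite K] (χ : K →* ℂˣ) (t : K) :
    conj (χ t : ℂ) = (χ t : ℂ)⁻¹ :=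
  (Complex.inv_eq_conj (χ.norm_apply_eq_one t)).symm

variable [Fintype K] [Fintype (K →* ℂˣ)]

theorem sum_apply_eq_ite [DecidableEq K] (g : K) :
    ∑ χ : K →* ℂˣ, (χ g : ℂ) = if g = 1 then (Fintype.card K : ℂ) else 0 := by
  classical
  let ev : (K →* ℂˣ) →* ℂ := (Units.coeHom ℂ).comp (MonoidHom.eval g)
  have hev : ev = 1 ↔ g = 1 := by
    simpa [ev, MonoidHom.ext_iff] using
      CommGroup.forall_apply_eq_apply_iff (M := ℂ) (g := g) (g' := 1)
  have hcard : Fintype.card (K →* ℂˣ) = Fintype.card K := by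
    simpa only [Nat.card_eq_fintype_card] using
      CommGroup.card_monoidHom_of_hasEnoughRootsOfUnity K ℂ
  simpa [ev, hev, hcard] using sum_hom_units ev

theorem sum_norm_sq_sum_mul_inv_apply (f : K → ℂ) :
    ∑ χ : K →* ℂˣ, (‖∑ t, f t * (χ t : ℂ)⁻¹‖ : ℂ) ^ 2
      = Fintype.card K * ∑ t, (‖f t‖ : ℂ) ^ 2 := by
  classical
  calc ∑ χ : K →* ℂˣ, (‖∑ t, f t * (χ t : ℂ)⁻¹‖ : ℂ) ^ 2
      = ∑ χ : K →* ℂˣ, ∑ t, ∑ s, f t * conj (f s) * (χ (t⁻¹ * s) : ℂ) := by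
        refine sum_congr rfl fun χ _ => ?_
        rw [← Complex.mul_conj', map_sum, sum_mul_sum]
        refine sum_congr rfl fun t _ => sum_congr rfl fun s _ => ?_
        rw [map_mul, map_inv₀, conj_apply_eq_inv, inv_inv, map_mul, map_inv,
          Units.val_mul, Units.val_inv_eq_inv_val]
        ring
    _ = ∑ t, ∑ s, f t * conj (f s) * ∑ χ : K →* ℂˣ, (χ (t⁻¹ * s) : ℂ) := by
        simp only [mul_sum]
        rw [sum_comm]
        exact sum_congr rfl fun t _ => sum_comm
    _ = ∑ t, f t * conj (f t) * Fintype.card K := by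
        refine sum_congr rfl fun t _ => ?_
        simp only [sum_apply_eq_ite, inv_mul_eq_one, mul_ite, mul_zero, sum_ite_eq,
          mem_univ, if_true]
    _ = Fintype.card K * ∑ t, (‖f t‖ : ℂ) ^ 2 := by
        rw [mul_sum]
        exact sum_congr rfl fun t _ => by rw [Complex.mul_conj', mul_comm]

end MonoidHom

section WeightedInner

variable {ι : Type*} [Fintype ι] (w : ι → ℝ)

noncomputable def weightedInner (φ ψ : ι → ℂ) : ℂ :=
  ∑ i, (w i : ℂ)⁻¹ * φ i * conj (ψ i)

structure IsOrthogonalBasis (Φ : Finset (ι → ℂ)) : Prop where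
  ne_zero : ∀ φ ∈ Φ, φ ≠ 0
  orthogonal : ∀ φ ∈ Φ, ∀ ψ ∈ Φ, φ ≠ ψ → weightedInner w φ ψ = 0
  span_eq_top : Submodule.span ℂ (Φ : Set (ι → ℂ)) = ⊤

variable {w}

theorem weightedInner_self (φ : ι → ℂ) :
    weightedInner w φ φ = ∑ i, (w i : ℂ)⁻¹ * (‖φ i‖ : ℂ) ^ 2 := by
  simp only [weightedInner, mul_assoc, Complex.mul_conj']

theorem weightedInner_self_ne_zero (hw : ∀ i, 0 < w i) {φ : ι → ℂ} (hφ : φ ≠ 0) :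
    weightedInner w φ φ ≠ 0 := by
  obtain ⟨k, hk⟩ := Function.ne_iff.mp hφ
  have hpos : 0 < ∑ i, (w i)⁻¹ * ‖φ i‖ ^ 2 :=
    sum_pos' (fun i _ => by have := hw i; positivity)
      ⟨k, mem_univ k, by have := hw k; have := norm_pos_iff.mpr hk; positivity⟩
  rw [weightedInner_self]
  exact_mod_cast hpos.ne'

theorem weightedInner_sum_smul_left (Φ : Finset (ι → ℂ)) (f : (ι → ℂ) → ℂ) (ψ : ι → ℂ) :
    weightedInner w (∑ φ ∈ Φ, f φ • φ) ψ = ∑ φ ∈ Φ, f φ * weightedInner w φ ψ := by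
  simp only [weightedInner, Finset.sum_apply, Pi.smul_apply, smul_eq_mul, mul_sum, sum_mul]
  rw [sum_comm]
  exact sum_congr rfl fun φ _ => sum_congr rfl fun i _ => by ring

theorem weightedInner_single_left [DecidableEq ι] (i : ι) (ψ : ι → ℂ) :
    weightedInner w (Pi.single i 1) ψ = (w i : ℂ)⁻¹ * conj (ψ i) := by
  simp [weightedInner, Pi.single_apply]

namespace IsOrthogonalBasis

variable {Φ : Finset (ι → ℂ)}

theorem sum_smul_eq (hΦ : IsOrthogonalBasis w Φ) (hw : ∀ i, 0 < w i) (v : ι → ℂ) :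
    ∑ φ ∈ Φ, (weightedInner w v φ / weightedInner w φ φ) • φ = v := by
  have hv : v ∈ Submodule.span ℂ (Φ : Set (ι → ℂ)) := hΦ.span_eq_top ▸ Submodule.mem_top
  obtain ⟨f, -, rfl⟩ := Submodule.mem_span_finset.mp hv
  refine sum_congr rfl fun ψ hψ => ?_
  rw [weightedInner_sum_smul_left, sum_eq_single_of_mem ψ hψ fun φ hφ hne => by
      rw [hΦ.orthogonal φ hφ ψ hψ hne, mul_zero],
    mul_div_cancel_right₀ _ (weightedInner_self_ne_zero hw (hΦ.ne_zero ψ hψ))]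

theorem sum_mul_conj_div [DecidableEq ι] (hΦ : IsOrthogonalBasis w Φ) (hw : ∀ i, 0 < w i)
    (i j : ι) :
    ∑ φ ∈ Φ, φ j * conj (φ i) / weightedInner w φ φ = if i = j then (w i : ℂ) else 0 := by
  have h := congrFun (hΦ.sum_smul_eq hw (Pi.single i 1)) j
  simp only [weightedInner_single_left, Finset.sum_apply, Pi.smul_apply, smul_eq_mul,
    Pi.single_apply] at h
  have hwi : (w i : ℂ) ≠ 0 := Complex.ofReal_ne_zero.mpr (hw i).ne'
  calc ∑ φ ∈ Φ, φ j * conj (φ i) / weightedInner w φ φ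
      = w i * ∑ φ ∈ Φ, (w i : ℂ)⁻¹ * conj (φ i) / weightedInner w φ φ * φ j := by
        rw [mul_sum]
        refine sum_congr rfl fun φ _ => ?_
        field_simp
    _ = if i = j then (w i : ℂ) else 0 := by
        rw [h, mul_ite, mul_one, mul_zero]
        exact if_congr eq_comm rfl rfl

theorem sum_eigenvalue_mul_norm_sq_div [DecidableEq ι] (hΦ : IsOrthogonalBasis w Φ)
    (hw : ∀ i, 0 < w i) {A : Matrix ι ι ℂ} {lam : (ι → ℂ) → ℂ}
    (hEig : ∀ φ ∈ Φ, A.mulVec φ = lam φ • φ) (i : ι) :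
    ∑ φ ∈ Φ, lam φ * (‖φ i‖ : ℂ) ^ 2 / weightedInner w φ φ = w i * A i i := by
  have hrow : ∀ φ ∈ Φ, lam φ * φ i = ∑ j, A i j * φ j := fun φ hφ => by
    simpa [Matrix.mulVec, dotProduct] using (congrFun (hEig φ hφ) i).symm
  calc ∑ φ ∈ Φ, lam φ * (‖φ i‖ : ℂ) ^ 2 / weightedInner w φ φ
      = ∑ j, A i j * ∑ φ ∈ Φ, φ j * conj (φ i) / weightedInner w φ φ := by
        simp only [mul_sum]
        rw [sum_comm]
        refine sum_congr rfl fun φ hφ => ?_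
        rw [← Complex.mul_conj', ← mul_assoc, hrow φ hφ, sum_mul, sum_div]
        exact sum_congr rfl fun j _ => by ring
    _ = w i * A i i := by
        simp [hΦ.sum_mul_conj_div hw, mul_comm]

theorem sum_eigenvalue_mul_sum_div [DecidableEq ι] (hΦ : IsOrthogonalBasis w Φ)
    (hw : ∀ i, 0 < w i) {A : Matrix ι ι ℂ} {lam : (ι → ℂ) → ℂ}
    (hEig : ∀ φ ∈ Φ, A.mulVec φ = lam φ • φ) (c : ι → ℂ) :
    ∑ φ ∈ Φ, lam φ * (∑ i, c i * (‖φ i‖ : ℂ) ^ 2) / weightedInner w φ φ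
      = ∑ i, w i * c i * A i i := by
  simp only [mul_sum, sum_div]
  rw [sum_comm]
  refine sum_congr rfl fun i _ => ?_
  rw [mul_right_comm, ← hΦ.sum_eigenvalue_mul_norm_sq_div hw hEig i, sum_mul]
  exact sum_congr rfl fun φ _ => by ring

end IsOrthogonalBasis

end WeightedInner

theorem Finset.sum_filter_exists_eq_of_injective {α β M : Type*} [Fintype α]
    [AddCommMonoid M] {s : Finset β} {e : α → β} (he : Function.Injective e) (hs : ∀ a, e a ∈ s)
    [DecidablePred fun b => ∃ a, b = e a] (g : β → M) :
    ∑ b ∈ s with ∃ a, b = e a, g b = ∑ a, g (e a) := by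
  classical
  rw [← sum_image fun a _ b _ h => he h]
  congr 1
  ext b
  simp only [mem_filter, mem_image, mem_univ, true_and]
  constructor
  · rintro ⟨-, a, rfl⟩
    exact ⟨a, rfl⟩
  · rintro ⟨a, rfl⟩
    exact ⟨hs a, a, rfl⟩

section Periods

variable {ι G : Type*} [CommGroup G] [Fintype G]

noncomputable def period (x : G → ι) (χ : G →* ℂˣ) (φ : ι → ℂ) : ℂ :=
  ∑ t, φ (x t) * (χ t : ℂ)⁻¹

variable [Fintype (G →* ℂˣ)]

theorem sum_norm_sq_period [Fintype ι] [DecidableEq ι] (x : G → ι) (φ : ι → ℂ) :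
    ∑ χ : G →* ℂˣ, (‖period x χ φ‖ : ℂ) ^ 2
      = Fintype.card G * ∑ i, (#{t | x t = i} : ℂ) * (‖φ i‖ : ℂ) ^ 2 := by
  simp only [period, MonoidHom.sum_norm_sq_sum_mul_inv_apply]
  rw [← sum_fiberwise' univ x fun i => (‖φ i‖ : ℂ) ^ 2]
  simp only [sum_const, nsmul_eq_mul]

theorem sum_norm_sq_period_of_norm_eq_one [Fintype ι] (x : G → ι) {φ : ι → ℂ}
    (hφ : ∀ i, ‖φ i‖ = 1) :
    ∑ χ : G →* ℂˣ, (‖period x χ φ‖ : ℂ) ^ 2 = (Fintype.card G : ℂ) ^ 2 := by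
  simp only [period]
  rw [MonoidHom.sum_norm_sq_sum_mul_inv_apply]
  simp [hφ, sq]

end Periods

noncomputable def eisensteinVector {ι H : Type*} [MulOneClass H] (ν : ι → H) (μ : H →* ℂˣ) :
    ι → ℂ :=
  fun i => μ (ν i)

theorem norm_eisensteinVector_apply {ι H : Type*} [CommGroup H] [Finite H] (ν : ι → H)
    (μ : H →* ℂˣ) (i : ι) : ‖eisensteinVector ν μ i‖ = 1 :=
  μ.norm_apply_eq_one (ν i)

theorem weightedInner_eisensteinVector_self {ι H : Type*} [Fintype ι] [CommGroup H] [Finite H]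
    (w : ι → ℝ) (ν : ι → H) (μ : H →* ℂˣ) :
    weightedInner w (eisensteinVector ν μ) (eisensteinVector ν μ)
      = ((∑ i, (w i)⁻¹ : ℝ) : ℂ) := by
  simp [weightedInner_self, norm_eisensteinVector_apply]

open scoped Classical in
theorem cuspidal_double_average_of_squared_periods_general
    (n : ℕ) (w : Fin n → ℝ) (hw : ∀ i, 0 < w i)
    (G : Type*) [CommGroup G] [Fintype G] [Fintype (G →* ℂˣ)]
    (H : Type*) [CommGroup H] [Fintype H] [Fintype (H →* ℂˣ)]
    (x : G → Fin n) (ν : Fin n → H)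
    (A : Matrix (Fin n) (Fin n) ℂ)
    (Φ : Finset (Fin n → ℂ)) (lam : (Fin n → ℂ) → ℂ)
    (hΦ0 : ∀ φ ∈ Φ, φ ≠ 0)
    (hΦorth : ∀ φ ∈ Φ, ∀ ψ ∈ Φ, φ ≠ ψ →
      ∑ i, ((w i : ℂ))⁻¹ * φ i * (starRingEnd ℂ) (ψ i) = 0)
    (hΦspan : Submodule.span ℂ (Φ : Set (Fin n → ℂ)) = ⊤)
    (hEig : ∀ φ ∈ Φ, A.mulVec φ = lam φ • φ)
    (d : ℂ) (m₀ : H)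
    (hEis : ∀ μ : H →* ℂˣ, (fun i => ((μ (ν i) : ℂ))) ∈ Φ)
    (hEisEig : ∀ μ : H →* ℂˣ,
      A.mulVec (fun i => ((μ (ν i) : ℂ))) = (d * (μ m₀ : ℂ)) • (fun i => ((μ (ν i) : ℂ))))
    (hinj : Function.Injective (fun (μ : H →* ℂˣ) => (fun i => ((μ (ν i) : ℂ))))) :
    ∑ φ ∈ Φ.filter (fun φ => ∀ μ : H →* ℂˣ, φ ≠ fun i => ((μ (ν i) : ℂ))),
        ∑ χ : G →* ℂˣ,
          lam φ * ((‖∑ t : G, φ (x t) * ((χ t : ℂ))⁻¹‖ : ℂ)) ^ 2 /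
            (∑ i, ((w i : ℂ))⁻¹ * φ i * (starRingEnd ℂ) (φ i))
      = (Fintype.card G : ℂ) * (∑ i, (w i : ℂ) *
            ((Finset.univ.filter (fun t : G => x t = i)).card : ℂ) * A i i)
        - (if m₀ = 1 then (1 : ℂ) else 0) * d * (Fintype.card G : ℂ) ^ 2
            * (Fintype.card H : ℂ) / ((∑ i, (w i)⁻¹ : ℝ) : ℂ) := by
  have hΦ : IsOrthogonalBasis w Φ := ⟨hΦ0, hΦorth, hΦspan⟩
  let term : (Fin n → ℂ) → ℂ := fun φ =>
    ∑ χ : G →* ℂˣ, lam φ * (‖period x χ φ‖ : ℂ) ^ 2 / weightedInner w φ φ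
  have hlam (μ : H →* ℂˣ) : lam (eisensteinVector ν μ) = d * μ m₀ :=
    smul_left_injective ℂ (hΦ0 _ (hEis μ)) ((hEig _ (hEis μ)).symm.trans (hEisEig μ))
  have hterm (φ : Fin n → ℂ) : term φ = Fintype.card G
      * (lam φ * (∑ i, (#{t | x t = i} : ℂ) * (‖φ i‖ : ℂ) ^ 2) / weightedInner w φ φ) := by
    simp only [term, ← sum_div, ← mul_sum, sum_norm_sq_period]
    ring
  have htotal : ∑ φ ∈ Φ, term φ
      = Fintype.card G * ∑ i, (w i : ℂ) * #{t | x t = i} * A i i := by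
    rw [sum_congr rfl fun φ _ => hterm φ, ← mul_sum, hΦ.sum_eigenvalue_mul_sum_div hw hEig]
  have hEisenstein : ∑ φ ∈ Φ with ¬ ∀ μ : H →* ℂˣ, φ ≠ eisensteinVector ν μ, term φ
      = (if m₀ = 1 then (1 : ℂ) else 0) * d * (Fintype.card G : ℂ) ^ 2
          * (Fintype.card H : ℂ) / ((∑ i, (w i)⁻¹ : ℝ) : ℂ) := by
    simp only [not_forall, not_not]
    rw [sum_filter_exists_eq_of_injective (e := eisensteinVector ν) hinj hEis]
    simp only [term, ← sum_div, ← mul_sum, weightedInner_eisensteinVector_self, hlam,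
      sum_norm_sq_period_of_norm_eq_one, norm_eisensteinVector_apply, implies_true]
    rw [← sum_mul, ← mul_sum, MonoidHom.sum_apply_eq_ite]
    split_ifs <;> ring
  have hsplit :=
    sum_filter_add_sum_filter_not Φ (fun φ => ∀ μ, φ ≠ eisensteinVector ν μ) term
  rw [htotal, hEisenstein] at hsplit
  exact eq_sub_of_add_eq hsplit

open scoped Classical in
theorem cuspidal_double_average_of_squared_periods
    (n : ℕ) (hn : 1 ≤ n) (w : Fin n → ℝ) (hw : ∀ i, 0 < w i)
    (G : Type*) [CommGroup G] [Fintype G] [Fintype (G →* ℂˣ)]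
    (H : Type*) [CommGroup H] [Fintype H] [Fintype (H →* ℂˣ)]
    (x : G → Fin n) (θ : G →* H) (ν : Fin n → H)
    (hν : ∀ t : G, ν (x t) = θ t)
    (A : Matrix (Fin n) (Fin n) ℂ)
    (Φ : Finset (Fin n → ℂ)) (lam : (Fin n → ℂ) → ℂ)
    (hΦ0 : ∀ φ ∈ Φ, φ ≠ 0)
    (hΦorth : ∀ φ ∈ Φ, ∀ ψ ∈ Φ, φ ≠ ψ →
      ∑ i, ((w i : ℂ))⁻¹ * φ i * (starRingEnd ℂ) (ψ i) = 0)
    (hΦspan : Submodule.span ℂ (Φ : Set (Fin n → ℂ)) = ⊤)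
    (hEig : ∀ φ ∈ Φ, A.mulVec φ = lam φ • φ)
    (d : ℂ) (m₀ : H)
    (hEis : ∀ μ : H →* ℂˣ, (fun i => ((μ (ν i) : ℂ))) ∈ Φ)
    (hEisEig : ∀ μ : H →* ℂˣ,
      A.mulVec (fun i => ((μ (ν i) : ℂ))) = (d * (μ m₀ : ℂ)) • (fun i => ((μ (ν i) : ℂ))))
    (hinj : Function.Injective (fun (μ : H →* ℂˣ) => (fun i => ((μ (ν i) : ℂ))))) :
    ∑ φ ∈ Φ.filter (fun φ => ∀ μ : H →* ℂˣ, φ ≠ fun i => ((μ (ν i) : ℂ))),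
        ∑ χ : G →* ℂˣ,
          lam φ * ((‖∑ t : G, φ (x t) * ((χ t : ℂ))⁻¹‖ : ℂ)) ^ 2 /
            (∑ i, ((w i : ℂ))⁻¹ * φ i * (starRingEnd ℂ) (φ i))
      = (Fintype.card G : ℂ) * (∑ i, (w i : ℂ) *
            ((Finset.univ.filter (fun t : G => x t = i)).card : ℂ) * A i i)
        - (if m₀ = 1 then (1 : ℂ) else 0) * d * (Fintype.card G : ℂ) ^ 2
            * (Fintype.card H : ℂ) / ((∑ i, (w i)⁻¹ : ℝ) : ℂ) :=
  cuspidal_double_average_of_squared_periods_general n w hw G H x ν A Φ lam hΦ0 hΦorth hΦspan hEig d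
    m₀ hEis hEisEig hinj
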